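/- For p ≥ 1 and 0 ≤ k ≤ p-1, ∑_{l=k}^{p-1} C(p, p-1-l) · C(-1/2, l-k) = (2p-1)!! / ((p-1-k)! (2k+1)!! 2^{p-k-1}), where C(-1/2, j) is the generalized binomial coefficient. -/

import Mathlib

/-!
Write `C(x, j)` for `Ring.choose x j`. After the shift `l = k + j` and with `p = k + m + 1`, the sum
is `∑_{j ≤ m} C(p, m - j) C(-1/2, j)`, which Chu–Vandermonde collapses to `C(p - 1/2, m)`.
Doubling each of the `m` factors of the falling factorial of `p - 1/2` turns it into the odd numbers
from `2k + 3` to `2p - 1`, i.e. `(2p - 1)‼ / (2k + 1)‼`.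
-/

/-- Generalized binomial coefficient `C(x, j)` for real `x` and integer `j`. -/
noncomputable def gchoose (x : ℝ) (j : ℤ) : ℝ :=
  if 0 ≤ j then (∏ i ∈ Finset.range j.toNat, (x - i)) / (Nat.factorial j.toNat : ℝ) else 0

open Finset Nat

lemma Ring.choose_eq_prod_range_div_factorial {K : Type*} [Field K] [CharZero K] (x : K) (n : ℕ) :
    Ring.choose x n = (∏ i ∈ range n, (x - i)) / n ! := by
  rw [Ring.choose_eq_smul, ← Polynomial.aeval_eq_smeval, Polynomial.aeval_def,
    ← Polynomial.eval_map, descPochhammer_map, descPochhammer_eval_eq_prod_range, smul_eq_mul,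
    inv_mul_eq_div]

lemma gchoose_natCast (x : ℝ) (n : ℕ) : gchoose x n = Ring.choose x n := by
  simp [gchoose, Ring.choose_eq_prod_range_div_factorial]

lemma Ring.choose_add_natCast_eq_sum {R : Type*} [CommRing R] [BinomialRing R] (x : R) (n m : ℕ) :
    Ring.choose (x + n) m = ∑ j ∈ range (m + 1), (n.choose (m - j) : R) * Ring.choose x j := by
  rw [Ring.add_choose_eq _ (Commute.all _ _), Nat.sum_antidiagonal_eq_sum_range_succ_mk]
  simp [Ring.choose_natCast, mul_comm]

lemma doubleFactorial_mul_prod_range (k m : ℕ) :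
    ((2 * k + 1)‼ : ℝ) * ∏ i ∈ range m, ((2 * (k + m) + 1 : ℝ) - 2 * i) = (2 * (k + m) + 1)‼ := by
  induction m with
  | zero => simp
  | succ m ih =>
    have hshift : ∀ i ∈ range m, (2 * (k + (m + 1) : ℕ) + 1 : ℝ) - 2 * (i + 1 : ℕ)
        = (2 * (k + m) + 1 : ℝ) - 2 * i := by
      intro i _; push_cast; ring
    rw [prod_range_succ', ← mul_assoc]
    push_cast at hshift ⊢
    rw [prod_congr rfl hshift, ih, show 2 * (k + (m + 1)) + 1 = 2 * (k + m) + 1 + 2 by ring,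
      doubleFactorial_add_two]
    push_cast; ring

lemma Ring.choose_add_half (k m : ℕ) :
    Ring.choose ((k + m : ℝ) + 1 / 2) m = (2 * (k + m) + 1)‼ / (m ! * (2 * k + 1)‼ * 2 ^ m) := by
  have hdouble : ∏ i ∈ range m, ((2 * (k + m) + 1 : ℝ) - 2 * i)
      = 2 ^ m * ∏ i ∈ range m, ((k + m : ℝ) + 1 / 2 - i) := by
    rw [← card_range m, ← prod_const, card_range, ← prod_mul_distrib]
    exact prod_congr rfl fun i _ => by ring
  have hdf : ((2 * k + 1)‼ : ℝ) ≠ 0 := by positivity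
  rw [Ring.choose_eq_prod_range_div_factorial, ← doubleFactorial_mul_prod_range, hdouble]
  field_simp

theorem binom_half_sum_identity_reindexed (p k : ℕ) (hp : 1 ≤ p) (hk : k ≤ p - 1) :
    (∑ l ∈ Finset.Icc k (p - 1),
        (Nat.choose p (p - 1 - l) : ℝ) * gchoose (-1/2) ((l : ℤ) - (k : ℤ)))
      = (Nat.doubleFactorial (2 * p - 1) : ℝ) /
          ((Nat.factorial (p - 1 - k) : ℝ) * (Nat.doubleFactorial (2 * k + 1) : ℝ) *
            2 ^ (p - k - 1)) := by
  obtain ⟨m, rfl⟩ : ∃ m, p = k + m + 1 := ⟨p - 1 - k, by omega⟩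
  have hshift : ∑ l ∈ Icc k (k + m + 1 - 1),
        ((k + m + 1).choose (k + m + 1 - 1 - l) : ℝ) * gchoose (-1/2) ((l : ℤ) - k)
      = ∑ j ∈ range (m + 1), ((k + m + 1).choose (m - j) : ℝ) * Ring.choose (-1/2 : ℝ) j := by
    rw [← Ico_add_one_right_eq_Icc, sum_Ico_eq_sum_range]
    refine sum_congr (by congr 1; omega) fun j _ => ?_
    rw [show k + m + 1 - 1 - (k + j) = m - j by omega, Nat.cast_add, add_sub_cancel_left,
      gchoose_natCast]
  have hhalf : (-1/2 : ℝ) + (k + m + 1 : ℕ) = k + m + 1 / 2 := by push_cast; ring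
  rw [hshift, ← Ring.choose_add_natCast_eq_sum, hhalf, Ring.choose_add_half,
    show 2 * (k + m + 1) - 1 = 2 * (k + m) + 1 by omega, show k + m + 1 - 1 - k = m by omega,
    show k + m + 1 - k - 1 = m by omega]
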